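/- arXiv:1206.3686 — 4 statements merged into one kernel-verified Lean document; each statement's English description precedes it below -/
import Mathlib

section
/- Minimum distance of the polynomial (Reed–Solomon) code: let F be a field with DecidableEq, d m : ℕ with 2*d + 1 ≤ m, and α : Fin m → F injective. If f g : Polynomial F satisfy f.degree ≤ d, g.degree ≤ d, and f ≠ g, then the Hamming distance between the evaluation vectors (fun i => f.eval (α i)) and (fun i => g.eval (α i)) is at least m - d (in particular at least d + 1 when m = 2d + 1). -/
open Finset Polynomial

namespace Polynomial

variable {R ι : Type*} [CommRing R] [IsDomain R] [DecidableEq R] [Fintype ι]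

theorem card_filter_eval_eq_zero_le_natDegree {p : R[X]} (hp : p ≠ 0) {α : ι → R}
    (hα : Function.Injective α) : #{i | p.eval (α i) = 0} ≤ p.natDegree := by
  rw [← card_image_of_injective _ hα]
  refine card_le_degree_of_subset_roots fun x hx => ?_
  obtain ⟨i, hi, rfl⟩ := mem_image.mp hx
  exact (mem_roots hp).mpr (mem_filter.mp hi).2

theorem card_sub_natDegree_le_hammingNorm_eval {p : R[X]} (hp : p ≠ 0) {α : ι → R}
    (hα : Function.Injective α) :
    Fintype.card ι - p.natDegree ≤ hammingNorm fun i => p.eval (α i) := by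
  have hsplit := card_filter_add_card_filter_not (s := univ) fun i => p.eval (α i) = 0
  have hzeros := card_filter_eval_eq_zero_le_natDegree hp hα
  rw [card_univ] at hsplit
  simp only [hammingNorm, ne_eq]
  omega

end Polynomial

theorem reedSolomon_min_dist_general {F : Type*} [Field F] [DecidableEq F]
    (d m : ℕ) (α : Fin m → F) (hα : Function.Injective α)
    (f g : Polynomial F) (hf : f.degree ≤ d) (hg : g.degree ≤ d) (hfg : f ≠ g) :
    m - d ≤ hammingDist (fun i => f.eval (α i)) (fun i => g.eval (α i)) := by
  have hdeg : (f - g).natDegree ≤ d :=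
    natDegree_le_iff_degree_le.mpr ((degree_sub_le f g).trans (max_le hf hg))
  calc m - d ≤ Fintype.card (Fin m) - (f - g).natDegree := by rw [Fintype.card_fin]; omega
    _ ≤ _ := card_sub_natDegree_le_hammingNorm_eval (sub_ne_zero.mpr hfg) hα
    _ = _ := by simp only [hammingNorm, hammingDist, eval_sub, sub_ne_zero]

/-- Minimum distance of the polynomial (Reed–Solomon) code: two distinct
polynomials of degree at most `d`, evaluated at `m ≥ 2d+1` distinct points, give
evaluation vectors at Hamming distance at least `m - d`. -/
theorem reedSolomon_min_dist {F : Type*} [Field F] [DecidableEq F]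
    (d m : ℕ) (hm : 2 * d + 1 ≤ m) (α : Fin m → F) (hα : Function.Injective α)
    (f g : Polynomial F) (hf : f.degree ≤ d) (hg : g.degree ≤ d) (hfg : f ≠ g) :
    m - d ≤ hammingDist (fun i => f.eval (α i)) (fun i => g.eval (α i)) :=
  reedSolomon_min_dist_general d m α hα f g hf hg hfg
end

section
/- If G₁ and G₂ are isomorphic simple graphs on a finite vertex type V (i.e., Nonempty (G₁ ≃g G₂)), then the distribution of a uniformly random vertex-relabeling of G₁ equals the distribution of a uniformly random vertex-relabeling of G₂: PMF.map (fun π => SimpleGraph.map π.toEmbedding G₁) (PMF.uniformOfFintype (Equiv.Perm V)) = PMF.map (fun π => SimpleGraph.map π.toEmbedding G₂) (PMF.uniformOfFintype (Equiv.Perm V)). -/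
/-! If `e : G₁ ≃g G₂`, relabeling `G₂` by `π` is relabeling `G₁` by `π * e`, and right
multiplication by `e` is a bijection of `Equiv.Perm V`, so it preserves the uniform distribution. -/

lemma SimpleGraph.Iso.map_toEmbedding_eq {V W : Type*} {G : SimpleGraph V} {G' : SimpleGraph W}
    (e : G ≃g G') : G.map e.toEquiv.toEmbedding = G' := by
  rw [← SimpleGraph.comap_symm]
  exact e.symm.toEmbedding.comap_eq

lemma PMF.map_equiv_uniformOfFintype {α β : Type*} [Fintype α] [Nonempty α] [Fintype β]
    [Nonempty β] (e : α ≃ β) : (uniformOfFintype α).map e = uniformOfFintype β := by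
  ext b
  rw [map_apply, tsum_eq_single (e.symm b) fun a ha => by simpa [← e.symm_apply_eq] using ha.symm]
  simp [Fintype.card_congr e]

/-- If `G₁` and `G₂` are isomorphic simple graphs on a finite vertex type, then a
uniformly random vertex-relabeling of `G₁` is identically distributed to a
uniformly random vertex-relabeling of `G₂`. -/
theorem iso_graphs_random_relabeling_eq {V : Type*} [Fintype V] [DecidableEq V]
    (G₁ G₂ : SimpleGraph V) (h : Nonempty (G₁ ≃g G₂)) :
    PMF.map (fun π : Equiv.Perm V => SimpleGraph.map π.toEmbedding G₁)
        (PMF.uniformOfFintype (Equiv.Perm V)) =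
      PMF.map (fun π : Equiv.Perm V => SimpleGraph.map π.toEmbedding G₂)
        (PMF.uniformOfFintype (Equiv.Perm V)) := by
  obtain ⟨e⟩ := h
  have relabel_G₂ : (fun π : Equiv.Perm V => G₂.map π.toEmbedding) =
      (fun π : Equiv.Perm V => G₁.map π.toEmbedding) ∘ Equiv.mulRight e.toEquiv := by
    funext π
    calc G₂.map π.toEmbedding = (G₁.map e.toEquiv.toEmbedding).map π.toEmbedding := by
          rw [e.map_toEmbedding_eq]
      _ = G₁.map (π * e.toEquiv).toEmbedding := G₁.map_map _ _
  rw [relabel_G₂, ← PMF.map_comp, PMF.map_equiv_uniformOfFintype]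
end

section
/- Soundness of one round of the graph non-isomorphism protocol: let V be a finite type with decidable equality and G₁ G₂ : SimpleGraph V with Nonempty (G₁ ≃g G₂). Then for every strategy s : SimpleGraph V → Bool of Merlin, the number of pairs (b, π) ∈ Bool × Equiv.Perm V with s (SimpleGraph.map π.toEmbedding (if b then G₁ else G₂)) = b equals Fintype.card (Equiv.Perm V); i.e., Merlin identifies Arthur's coin with probability exactly 1/2. -/
/-!
Write `π • G` for `G.map π.toEmbedding`. If `σ : G₁ ≃g G₂`, then `π ↦ π * σ` is a bijection of
`Equiv.Perm V` with `π • G₂ = (π * σ) • G₁`, so a uniformly random relabelling of `G₂` has the same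
distribution as one of `G₁`. Counting the `b = false` pairs through `G₁` instead of `G₂`, every `π`
then contributes exactly one correct guess, namely for the coin `b = s (π • G₁)`.
-/

open Finset

namespace SimpleGraph

variable {V : Type*}

theorem Iso.map_toEmbedding_eq_s14 {W : Type*} {G : SimpleGraph V} {G' : SimpleGraph W}
    (e : G ≃g G') : G.map e.toEquiv.toEmbedding = G' := by
  rw [← comap_symm]
  exact Embedding.comap_eq e.symm.toEmbedding

theorem map_perm_mul (G : SimpleGraph V) (π σ : Equiv.Perm V) :
    G.map (π * σ).toEmbedding = (G.map σ.toEmbedding).map π.toEmbedding := by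
  rw [map_map]
  rfl

theorem card_filter_map_perm_of_iso [Fintype V] [DecidableEq V] {G G' : SimpleGraph V}
    (e : G ≃g G') (p : SimpleGraph V → Prop) [DecidablePred p] :
    #{π : Equiv.Perm V | p (G'.map π.toEmbedding)} =
      #{π : Equiv.Perm V | p (G.map π.toEmbedding)} := by
  refine card_equiv (Equiv.mulRight e.toEquiv) fun π => ?_
  simp only [mem_filter, mem_univ, true_and, Equiv.coe_mulRight, map_perm_mul,
    e.map_toEmbedding_eq_s14]

end SimpleGraph

theorem Finset.card_filter_bool_prod {α : Type*} [Fintype α] (p : Bool × α → Prop)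
    [DecidablePred p] : #{x | p x} = #{a | p (true, a)} + #{a | p (false, a)} := by
  simp only [card_filter, Fintype.sum_prod_type, Fintype.sum_bool]

theorem Finset.card_filter_eq_true_add_card_filter_eq_false {α : Type*} [Fintype α]
    (f : α → Bool) : #{a | f a = true} + #{a | f a = false} = Fintype.card α := by
  simpa using card_filter_add_card_filter_not (s := univ) (fun a => f a = true)

/-- Soundness of one round of the graph non-isomorphism protocol: if `G₁ ≃g G₂`,
then for any strategy `s` of Merlin, the number of pairs `(b, π)` of a coin and
a permutation on which Merlin guesses Arthur's coin correctly is exactly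
`|Equiv.Perm V|`, i.e. Merlin succeeds with probability exactly `1/2`. -/
theorem graph_noniso_one_round_soundness {V : Type*} [Fintype V] [DecidableEq V]
    (G₁ G₂ : SimpleGraph V) (h : Nonempty (G₁ ≃g G₂))
    (s : SimpleGraph V → Bool) :
    (Finset.univ.filter fun bp : Bool × Equiv.Perm V =>
        s (SimpleGraph.map bp.2.toEmbedding (if bp.1 then G₁ else G₂)) = bp.1).card =
      Fintype.card (Equiv.Perm V) := by
  obtain ⟨e⟩ := h
  rw [card_filter_bool_prod]
  simp only [if_true, Bool.false_eq_true, if_false]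
  rw [SimpleGraph.card_filter_map_perm_of_iso e (fun G => s G = false)]
  exact card_filter_eq_true_add_card_filter_eq_false _
end

section
/- Soundness amplification by k independent repetitions: let V be a finite type with decidable equality and G₁ G₂ : SimpleGraph V with Nonempty (G₁ ≃g G₂), and let k : ℕ. Then for every family of strategies s : Fin k → SimpleGraph V → Bool, the number of tuples p : Fin k → Bool × Equiv.Perm V such that for every round i, s i (SimpleGraph.map (p i).2.toEmbedding (if (p i).1 then G₁ else G₂)) = (p i).1 equals (Fintype.card (Equiv.Perm V))^k; i.e., out of the (2 · |Perm V|)^k equally likely choices of Arthur, Merlin answers all k rounds correctly in exactly a 2^{-k} fraction. -/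
/-!
If `e : G₁ ≃g G₂`, then Arthur's message for `(false, π * e⁻¹)` is the same graph as for
`(true, π)`. So Arthur's choices in one round pair up into pairs with identical messages and
opposite coins, and whatever Merlin answers, he is right on exactly one choice of each pair:
`|Perm V|` winning choices per round. The rounds are independent, so the counts multiply.
-/

open Finset

theorem Finset.card_filter_forall_eq_prod {ι : Type*} [Fintype ι] [DecidableEq ι] {α : ι → Type*}
    [∀ i, Fintype (α i)] (P : ∀ i, α i → Prop) [∀ i, DecidablePred (P i)]
    [DecidablePred fun p : ∀ i, α i ↦ ∀ i, P i (p i)] :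
    #{p : ∀ i, α i | ∀ i, P i (p i)} = ∏ i, #{a | P i a} := by
  rw [← Fintype.card_piFinset]
  congr 1
  ext p
  simp [Fintype.mem_piFinset]

theorem card_filter_guess_eq_card {X Y : Type*} [Fintype X] (view : Bool → X → Y)
    (φ : X ≃ X) (hφ : ∀ x, view false (φ x) = view true x) (guess : Y → Bool) :
    #{bx : Bool × X | guess (view bx.1 bx.2) = bx.1} = Fintype.card X := by
  rw [card_filter, Fintype.sum_prod_type, Fintype.sum_bool,
    ← φ.sum_comp fun x ↦ if guess (view false x) = false then 1 else 0, ← sum_add_distrib,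
    Fintype.card_eq_sum_ones]
  refine sum_congr rfl fun x _ ↦ ?_
  rw [hφ]
  cases guess (view true x) <;> rfl

namespace SimpleGraph.Iso

variable {V : Type*} {G₁ G₂ : SimpleGraph V}

theorem map_symm_eq {W : Type*} {H : SimpleGraph W} (e : G₁ ≃g H) :
    H.map e.toEquiv.symm.toEmbedding = G₁ := by
  rw [SimpleGraph.map_symm]
  exact e.toEmbedding.comap_eq

theorem map_mul_symm_eq (e : G₁ ≃g G₂) (π : Equiv.Perm V) :
    G₂.map (π * e.toEquiv.symm).toEmbedding = G₁.map π.toEmbedding :=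
  calc G₂.map (π * e.toEquiv.symm).toEmbedding
      = (G₂.map e.toEquiv.symm.toEmbedding).map π.toEmbedding := by
        rw [SimpleGraph.map_map]; rfl
    _ = G₁.map π.toEmbedding := by rw [e.map_symm_eq]

theorem card_filter_guess_map_perm_eq [Fintype V] [DecidableEq V] (e : G₁ ≃g G₂)
    (guess : SimpleGraph V → Bool) :
    #{x : Bool × Equiv.Perm V |
        guess ((if x.1 then G₁ else G₂).map x.2.toEmbedding) = x.1} =
      Fintype.card (Equiv.Perm V) :=
  card_filter_guess_eq_card (fun b π ↦ (if b then G₁ else G₂).map π.toEmbedding)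
    (Equiv.mulRight e.toEquiv.symm) e.map_mul_symm_eq guess

end SimpleGraph.Iso

/-- Soundness amplification by `k` independent repetitions of the graph
non-isomorphism protocol: if `G₁ ≃g G₂`, then for any family of strategies
`s i` of Merlin, the number of tuples of coins and permutations
`p : Fin k → Bool × Equiv.Perm V` on which Merlin guesses Arthur's coin
correctly in every round is exactly `|Equiv.Perm V|^k`, i.e. Merlin answers all
`k` rounds correctly in exactly a `2^{-k}` fraction of Arthur's
`(2 · |Equiv.Perm V|)^k` equally likely choices. -/
theorem graph_noniso_k_round_soundness {V : Type*} [Fintype V] [DecidableEq V]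
    (G₁ G₂ : SimpleGraph V) (h : Nonempty (G₁ ≃g G₂)) (k : ℕ)
    (s : Fin k → SimpleGraph V → Bool) :
    (Finset.univ.filter fun p : Fin k → Bool × Equiv.Perm V =>
        ∀ i, s i (SimpleGraph.map (p i).2.toEmbedding (if (p i).1 then G₁ else G₂))
              = (p i).1).card =
      Fintype.card (Equiv.Perm V) ^ k := by
  obtain ⟨e⟩ := h
  calc _ = ∏ i, Fintype.card (Equiv.Perm V) :=
        (card_filter_forall_eq_prod _).trans
          (prod_congr rfl fun i _ ↦ e.card_filter_guess_map_perm_eq (s i))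
    _ = Fintype.card (Equiv.Perm V) ^ k := by simp
end
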